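/- Let α be irrational with denominators (q_n), let β ∈ ℝ and δ > 0 with ‖q_n β‖ ≥ δ for some fixed n. Then for every integer b with (δ/4)·q_n ≤ b ≤ (δ/2)·q_n and every integer j with |j| < b, one has ‖β − jα‖ ≥ (δ²/8)·(1/b). -/

import Mathlib

/-!
Identifying `distInt x` with the norm of `x` in `ℝ/ℤ`, subadditivity and `‖k • x‖ ≤ |k| ‖x‖` give
`‖q β‖ ≤ q ‖β - j α‖ + |j| ‖q α‖`. For the convergent denominator `q = q_n` of an irrational `α`
one has `‖q α‖ ≤ 1/q`, so the last term is at most `b/q ≤ δ/2`; hence `‖β - j α‖ ≥ δ/(2q)`,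
which is at least `δ²/(8b)` because `δ q ≤ 4b`.
-/

/-- The distance from a real number to the nearest integer. -/
noncomputable def distInt (x : ℝ) : ℝ := ⨅ m : ℤ, |x - m|

namespace GenContFract

open GenContFract (of)

variable {K : Type*} [Field K] [LinearOrder K] [FloorRing K]

theorem exists_int_eq_contsAux_a (v : K) (n : ℕ) : ∃ a : ℤ, ((of v).contsAux n).a = a := by
  induction n using Nat.strong_induction_on with
  | _ n ih =>
    match n with
    | 0 => exact ⟨1, by simp [contsAux]⟩
    | 1 => exact ⟨⌊v⌋, by simp [contsAux, of_h_eq_floor]⟩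
    | m + 2 =>
      obtain ⟨a₀, h₀⟩ := ih m (by omega)
      obtain ⟨a₁, h₁⟩ := ih (m + 1) (by omega)
      cases hs : (of v).s.get? m with
      | none => exact ⟨a₁, by rw [contsAux_stable_step_of_terminated hs, h₁]⟩
      | some gp =>
        obtain ⟨hga, z, hz⟩ := of_partNum_eq_one_and_exists_int_partDen_eq hs
        refine ⟨z * a₁ + a₀, ?_⟩
        rw [contsAux_recurrence hs rfl rfl, hga, hz, h₀, h₁]
        push_cast
        ring

theorem exists_int_eq_nums (v : K) (n : ℕ) : ∃ a : ℤ, (of v).nums n = a :=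
  exists_int_eq_contsAux_a v (n + 1)

theorem one_le_of_den [IsStrictOrderedRing K] {v : K} (n : ℕ) : 1 ≤ (of v).dens n := by
  simpa using monotone_nat_of_le_succ (fun m => (of_den_mono : (of v).dens m ≤ _)) (Nat.zero_le n)

theorem abs_dens_mul_sub_nums_le [IsStrictOrderedRing K] {v : K} {n : ℕ}
    (h : ¬(of v).TerminatedAt n) :
    |(of v).dens n * v - (of v).nums n| ≤ 1 / (of v).dens (n + 1) := by
  have hden : 0 < (of v).dens n := zero_lt_one.trans_le (one_le_of_den n)
  calc |(of v).dens n * v - (of v).nums n| = (of v).dens n * |v - (of v).convs n| := by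
        rw [conv_eq_num_div_den, ← abs_of_pos hden, ← abs_mul, abs_of_pos hden, mul_sub,
          mul_div_cancel₀ _ hden.ne']
    _ ≤ (of v).dens n * (1 / ((of v).dens n * (of v).dens (n + 1))) := by
        gcongr; exact abs_sub_convs_le h
    _ = 1 / (of v).dens (n + 1) := by field_simp

end GenContFract

theorem distInt_eq_abs_sub_round (x : ℝ) : distInt x = |x - round x| :=
  le_antisymm (ciInf_le ⟨0, by rintro _ ⟨m, rfl⟩; positivity⟩ _) (le_ciInf (round_le x))

theorem distInt_eq_norm (x : ℝ) : distInt x = ‖(x : UnitAddCircle)‖ := by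
  rw [distInt_eq_abs_sub_round, UnitAddCircle.norm_eq]

theorem distInt_le (x : ℝ) (m : ℤ) : distInt x ≤ |x - m| :=
  distInt_eq_abs_sub_round x ▸ round_le x m

theorem Irrational.distInt_dens_mul_le {α : ℝ} (hα : Irrational α) (n : ℕ) :
    distInt ((GenContFract.of α).dens n * α) ≤ 1 / (GenContFract.of α).dens n := by
  have hterm : ¬(GenContFract.of α).TerminatedAt n := fun h => by
    obtain ⟨r, hr⟩ := GenContFract.exists_rat_eq_of_terminates ⟨n, h⟩
    exact hα ⟨r, hr.symm⟩
  obtain ⟨p, hp⟩ := GenContFract.exists_int_eq_nums α n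
  calc distInt ((GenContFract.of α).dens n * α) ≤ 1 / (GenContFract.of α).dens (n + 1) :=
        hp ▸ distInt_le _ p |>.trans (GenContFract.abs_dens_mul_sub_nums_le hterm)
    _ ≤ 1 / (GenContFract.of α).dens n :=
        one_div_le_one_div_of_le (zero_lt_one.trans_le (GenContFract.one_le_of_den n))
          GenContFract.of_den_mono

theorem distInt_natCast_mul_le (q : ℕ) (j : ℤ) (x y : ℝ) :
    distInt (q * x) ≤ q * distInt (x - j * y) + |(j : ℝ)| * distInt (q * y) := by
  have hsplit : ((q * x : ℝ) : UnitAddCircle) =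
      q • ((x - j * y : ℝ) : UnitAddCircle) + j • ((q * y : ℝ) : UnitAddCircle) := by
    rw [← AddCircle.coe_nsmul, ← AddCircle.coe_zsmul, ← AddCircle.coe_add]
    congr 1; simp only [nsmul_eq_mul, zsmul_eq_mul]; ring
  simp only [distInt_eq_norm, hsplit]
  calc _ ≤ ‖q • ((x - j * y : ℝ) : UnitAddCircle)‖ + ‖j • ((q * y : ℝ) : UnitAddCircle)‖ :=
        norm_add_le _ _
    _ ≤ _ := by
        gcongr
        · exact norm_nsmul_le
        · exact (norm_zsmul_le _ _).trans_eq (by rw [Int.norm_eq_abs])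

theorem distInt_beta_sub_mul_alpha_lower_bound_general (α β : ℝ) (hα : Irrational α)
    (n q : ℕ) (hq : (q : ℝ) = (GenContFract.of α).dens n)
    (δ : ℝ) (hδ : 0 < δ) (hβ : δ ≤ distInt ((q : ℝ) * β)) :
    ∀ b : ℕ, δ / 4 * (q : ℝ) ≤ (b : ℝ) → (b : ℝ) ≤ δ / 2 * (q : ℝ) →
      ∀ j : ℤ, |j| < (b : ℤ) →
        δ ^ 2 / 8 * (1 / (b : ℝ)) ≤ distInt (β - (j : ℝ) * α) := by
  intro b hb_lower hb_upper j hj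
  have hq_pos : (0 : ℝ) < q := hq ▸ zero_lt_one.trans_le (GenContFract.one_le_of_den n)
  have hb_pos : (0 : ℝ) < b := by exact_mod_cast (abs_nonneg j).trans_lt hj
  have hj_le : |(j : ℝ)| ≤ b := by exact_mod_cast hj.le
  have hqα : distInt (q * α) ≤ 1 / q := hq ▸ hα.distInt_dens_mul_le n
  have hjα : |(j : ℝ)| * distInt (q * α) ≤ δ / 2 :=
    calc |(j : ℝ)| * distInt (q * α) ≤ b * (1 / q) :=
          mul_le_mul hj_le hqα (distInt_eq_norm _ ▸ norm_nonneg _) hb_pos.le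
      _ ≤ δ / 2 := by rwa [mul_one_div, div_le_iff₀ hq_pos]
  have hδq : δ / (2 * q) ≤ distInt (β - j * α) := by
    rw [div_le_iff₀ (by positivity)]
    linarith [distInt_natCast_mul_le q j β α]
  calc δ ^ 2 / 8 * (1 / b) ≤ δ / (2 * q) := by
        rw [mul_one_div, div_le_div_iff₀ (by positivity) (by positivity)]
        nlinarith
    _ ≤ distInt (β - j * α) := hδq

/-- If `q_n` is a denominator of the irrational `α` and `‖q_n β‖ ≥ δ > 0`, then for
every integer `b` with `(δ/4) q_n ≤ b ≤ (δ/2) q_n` and every `|j| < b`,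
`‖β - j α‖ ≥ (δ²/8) / b`. -/
theorem distInt_beta_sub_mul_alpha_lower_bound (α β : ℝ) (hα : Irrational α)
    (n q : ℕ) (hqpos : 0 < q) (hq : (q : ℝ) = (GenContFract.of α).dens n)
    (δ : ℝ) (hδ : 0 < δ) (hβ : δ ≤ distInt ((q : ℝ) * β)) :
    ∀ b : ℕ, δ / 4 * (q : ℝ) ≤ (b : ℝ) → (b : ℝ) ≤ δ / 2 * (q : ℝ) →
      ∀ j : ℤ, |j| < (b : ℤ) →
        δ ^ 2 / 8 * (1 / (b : ℝ)) ≤ distInt (β - (j : ℝ) * α) :=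
  distInt_beta_sub_mul_alpha_lower_bound_general α β hα n q hq δ hδ hβ
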